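/- In the proof of the simplified presentation, for every symmetrizable Kac–Moody algebra s with a_ij·a_ji ≤ 3 for all distinct i,j ∈ I, the subalgebra U_i of the quantum affinization generated by {x^±_{i,m}, h_{i,r}, k_i^{±1}, C^{±1} : m ∈ ℤ, r ∈ ℤ∖{0}} is already generated by the six elements x^+_{i,0}, x^-_{i,0}, x^+_{i,−1}, x^-_{i,1}, k_i^{±1} and C^{±1}. -/

import Mathlib

/-!
Common infrastructure for formalising statements from
"Automorphisms of quantum toroidal algebras from an action of the
extended double affine braid group" (D. Laurie).

We work over the field `𝕂 = ℚ(q)` of rational functions, with `q` the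
indeterminate.  Quantum groups and quantum affinizations are realised as
`RingQuot`s of free algebras by the defining relations.
-/

noncomputable section
open scoped BigOperators

namespace QTor
open scoped Classical

/-- The ground field `k = ℚ(q)`. -/
abbrev 𝕂 : Type := RatFunc ℚ

/-- The deformation parameter `q`. -/
abbrev q : 𝕂 := RatFunc.X

/-- quantum integer `[m]_u = (u^m - u^{-m})/(u - u⁻¹)`. -/
def qnum (u : 𝕂) (m : ℤ) : 𝕂 := (u ^ m - u ^ (-m)) / (u - u⁻¹)

/-- quantum factorial `[s]_u!`. -/
def qfact (u : 𝕂) : ℕ → 𝕂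
  | 0 => 1
  | s + 1 => qfact u s * qnum u (s + 1)

/-- quantum binomial coefficient `[a choose s]_u`. -/
def qbinom (u : 𝕂) (a s : ℕ) : 𝕂 := qfact u a / (qfact u s * qfact u (a - s))

/-- twisted commutator `[x,y]_u = x y - u • (y x)`. -/
def tc {A : Type} [Ring A] [Algebra 𝕂 A] (u : 𝕂) (x y : A) : A := x * y - u • (y * x)

/-- Iterated twisted commutator `[b₁,…,b_s]_{u₁ ⋯ u_{s-1}}` (following Jing),
with the pairs `(uₜ, bₜ)` listed **outermost first**, i.e.
`twc [(u_{s-1}, b₁), (u_{s-2}, b₂), …, (u₁, b_{s-1})] b_s`. -/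
def twc {A : Type} [Ring A] [Algebra 𝕂 A] : List (𝕂 × A) → A → A
  | [], z => z
  | (u, b) :: rest, z => tc u b (twc rest z)

/-- A symmetrizable generalized Cartan matrix, together with a symmetrizer. -/
structure GCM (I : Type) where
  A : I → I → ℤ
  d : I → ℕ
  diag : ∀ i, A i i = 2
  offdiag : ∀ ⦃i j⦄, i ≠ j → A i j ≤ 0
  dpos : ∀ i, 0 < d i
  sym : ∀ i j, (d i : ℤ) * A i j = (d j : ℤ) * A j i

/-- `q_i = q^{d_i}`. -/
def GCM.qi {I : Type} (g : GCM I) (i : I) : 𝕂 := q ^ g.d i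

/-- Drinfeld "new" style generators for the quantum affinization:
`x b i m` is `x^±_{i,m}` (`b = true` for `+`), `h i r` is `h_{i,r}`,
`k true i = k_i`, `k false i = k_i⁻¹`, `c true = C`, `c false = C⁻¹`. -/
inductive Gen (I : Type) : Type
  | x : Bool → I → ℤ → Gen I
  | h : I → ℤ → Gen I
  | k : Bool → I → Gen I
  | c : Bool → Gen I

/-- Free algebra on the Drinfeld generators. -/
abbrev FA (I : Type) := FreeAlgebra 𝕂 (Gen I)

namespace FA
variable {I : Type}
def x (b : Bool) (i : I) (m : ℤ) : FA I := FreeAlgebra.ι 𝕂 (Gen.x b i m)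
def h (i : I) (r : ℤ) : FA I := FreeAlgebra.ι 𝕂 (Gen.h i r)
def k (i : I) : FA I := FreeAlgebra.ι 𝕂 (Gen.k true i)
def kinv (i : I) : FA I := FreeAlgebra.ι 𝕂 (Gen.k false i)
def c : FA I := FreeAlgebra.ι 𝕂 (Gen.c true)
def cinv : FA I := FreeAlgebra.ι 𝕂 (Gen.c false)
/-- `C^m` for `m : ℤ`, using `C⁻¹` for negative exponents. -/
def cpow (m : ℤ) : FA I := if 0 ≤ m then c ^ m.toNat else (cinv : FA I) ^ (-m).toNat
/-- `k_i^m` for `m : ℤ`. -/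
def kpow (i : I) (m : ℤ) : FA I := if 0 ≤ m then k i ^ m.toNat else kinv i ^ (-m).toNat
end FA

/-- Auxiliary sum in the definition of the elements `φ^±_{i,±r}`:
the coefficient of `z^{±r}` in `exp(±(q_i - q_i⁻¹) Σ_{s>0} h_{i,±s} z^{±s})`,
expanded as a sum over compositions of `r`.  Here `ε = ±1`. -/
def phiAux {I : Type} (u : 𝕂) (i : I) (ε : ℤ) (r : ℕ) : FA I :=
  ∑ l ∈ Finset.range (r + 1),
    (((ε : 𝕂) ^ l * (u - u⁻¹) ^ l) / (Nat.factorial l : 𝕂)) •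
      ∑ comp ∈ (Finset.Nat.antidiagonalTuple l r).filter (fun f => ∀ t, f t ≠ 0),
        (List.ofFn (fun t : Fin l => FA.h i (ε * (comp t : ℤ)))).prod

/-- The elements `φ^±_{i,m}` of the free algebra: `φ^+_{i,r}` is supported in
degrees `r ≥ 0` and `φ^-_{i,r}` in degrees `r ≤ 0`, defined by
`Σ_{s ≥ 0} φ^±_{i,±s} z^{±s} = k_i^{±1} exp(±(q_i - q_i⁻¹) Σ_{s'>0} h_{i,±s'} z^{±s'})`. -/
def phi {I : Type} (g : GCM I) (b : Bool) (i : I) (m : ℤ) : FA I :=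
  if b then (if 0 ≤ m then FA.k i * phiAux (g.qi i) i 1 m.toNat else 0)
  else (if m ≤ 0 then FA.kinv i * phiAux (g.qi i) i (-1) (-m).toNat else 0)

/-- The defining relations of the quantum affinization `Û_q` (Definition of
the quantum affinization / quantum toroidal algebra). -/
inductive ARel {I : Type} (g : GCM I) : FA I → FA I → Prop
  /- `C^{±1}` is central -/
  | c_comm (b : Bool) (a : Gen I) :
      ARel g (FreeAlgebra.ι 𝕂 (Gen.c b) * FreeAlgebra.ι 𝕂 a)
        (FreeAlgebra.ι 𝕂 a * FreeAlgebra.ι 𝕂 (Gen.c b))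
  /- `C C⁻¹ = C⁻¹ C = 1` -/
  | c_inv (b : Bool) :
      ARel g (FreeAlgebra.ι 𝕂 (Gen.c b) * FreeAlgebra.ι 𝕂 (Gen.c (!b))) 1
  /- `k_i k_i⁻¹ = k_i⁻¹ k_i = 1` -/
  | k_inv (b : Bool) (i : I) :
      ARel g (FreeAlgebra.ι 𝕂 (Gen.k b i) * FreeAlgebra.ι 𝕂 (Gen.k (!b) i)) 1
  /- `[k_i, k_j] = 0` -/
  | kk (b b' : Bool) (i j : I) :
      ARel g (FreeAlgebra.ι 𝕂 (Gen.k b i) * FreeAlgebra.ι 𝕂 (Gen.k b' j))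
        (FreeAlgebra.ι 𝕂 (Gen.k b' j) * FreeAlgebra.ι 𝕂 (Gen.k b i))
  /- `[k_i, h_{j,r}] = 0` -/
  | kh (b : Bool) (i j : I) (r : ℤ) :
      ARel g (FreeAlgebra.ι 𝕂 (Gen.k b i) * FA.h j r) (FA.h j r * FreeAlgebra.ι 𝕂 (Gen.k b i))
  /- the generator `h_{i,0}` is spurious (only `r ≠ 0` occurs) -/
  | h_zero (i : I) : ARel g (FA.h i 0) 0
  /- `[h_{i,r}, h_{j,s}] = δ_{r+s,0} ([r a_{ij}]_i / r) (C^r - C^{-r})/(q_j - q_j⁻¹)` -/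
  | hh (i j : I) (r s : ℤ) (hr : r ≠ 0) (hs : s ≠ 0) :
      ARel g (FA.h i r * FA.h j s)
        (FA.h j s * FA.h i r +
          (if r + s = 0 then
            (qnum (g.qi i) (r * g.A i j) / (r : 𝕂) / (g.qi j - (g.qi j)⁻¹)) •
              (FA.cpow r - FA.cpow (-r))
          else 0))
  /- `k_i x^±_{j,m} k_i⁻¹ = q_i^{± a_{ij}} x^±_{j,m}` -/
  | kx (b : Bool) (i j : I) (m : ℤ) :
      ARel g (FA.k i * FA.x b j m * FA.kinv i)
        ((g.qi i ^ (cond b (g.A i j) (-(g.A i j)))) • FA.x b j m)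
  /- `[h_{i,r}, x^±_{j,m}] = ±([r a_{ij}]_i / r) C^{(r ∓ |r|)/2} x^±_{j,r+m}` -/
  | hx (b : Bool) (i j : I) (r m : ℤ) (hr : r ≠ 0) :
      ARel g (FA.h i r * FA.x b j m - FA.x b j m * FA.h i r)
        (((cond b 1 (-1) : 𝕂) * qnum (g.qi i) (r * g.A i j) / (r : 𝕂)) •
          (FA.cpow (cond b (min r 0) (max r 0)) * FA.x b j (r + m)))
  /- `[x^+_{i,m}, x^-_{j,l}] = δ_{ij}/(q_i - q_i⁻¹) (C^{-l} φ^+_{i,m+l} - C^{-m} φ^-_{i,m+l})` -/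
  | xpm (i j : I) (m l : ℤ) :
      ARel g (FA.x true i m * FA.x false j l - FA.x false j l * FA.x true i m)
        (if i = j then
          ((g.qi i - (g.qi i)⁻¹)⁻¹) •
            (FA.cpow (-l) * phi g true i (m + l) - FA.cpow (-m) * phi g false i (m + l))
        else 0)
  /- `[x^±_{i,m+1}, x^±_{j,l}]_{q_i^{± a_{ij}}} + [x^±_{j,l+1}, x^±_{i,m}]_{q_i^{± a_{ij}}} = 0` -/
  | xx (b : Bool) (i j : I) (m l : ℤ) :
      ARel g (tc (g.qi i ^ (cond b (g.A i j) (-(g.A i j)))) (FA.x b i (m + 1)) (FA.x b j l) +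
            tc (g.qi i ^ (cond b (g.A i j) (-(g.A i j)))) (FA.x b j (l + 1)) (FA.x b i m)) 0
  /- quantum Serre relations -/
  | serre (b : Bool) (i j : I) (hij : i ≠ j) (m : ℤ)
      (ms : Fin (1 - g.A i j).toNat → ℤ) :
      ARel g (∑ σ : Equiv.Perm (Fin (1 - g.A i j).toNat),
        ∑ s ∈ Finset.range ((1 - g.A i j).toNat + 1),
          (((-1 : 𝕂) ^ s) * qbinom (g.qi i) (1 - g.A i j).toNat s) •
            (((List.ofFn fun t => FA.x b i (ms (σ t))).take s).prod * FA.x b j m *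
             ((List.ofFn fun t => FA.x b i (ms (σ t))).drop s).prod)) 0

/-- The quantum affinization of the quantum group attached to `g` (in
particular, the quantum toroidal algebra when `g` is of affine type, and the
untwisted quantum affine algebra in its Drinfeld new realization when `g` is
of finite type). -/
abbrev QA {I : Type} (g : GCM I) : Type := RingQuot (ARel g)

namespace QA
variable {I : Type} (g : GCM I)
/-- canonical projection from the free algebra. -/
def mk : FA I →ₐ[𝕂] QA g := RingQuot.mkAlgHom 𝕂 (ARel g)
def x (b : Bool) (i : I) (m : ℤ) : QA g := mk g (FA.x b i m)
def h (i : I) (r : ℤ) : QA g := mk g (FA.h i r)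
def k (i : I) : QA g := mk g (FA.k i)
def kinv (i : I) : QA g := mk g (FA.kinv i)
def c : QA g := mk g FA.c
def cinv : QA g := mk g FA.cinv
def cpow (m : ℤ) : QA g := mk g (FA.cpow m)
def kpow (i : I) (m : ℤ) : QA g := mk g (FA.kpow i m)
/-- divided power `(x)^{(s)} = x^s / [s]_i!`. -/
def dpow (u : 𝕂) (s : ℕ) (a : QA g) : QA g := (qfact u s)⁻¹ • a ^ s
end QA

end QTor

namespace QTor
open scoped Classical

/-! ### The Drinfeld–Jimbo presentation of quantum groups -/

/-- Chevalley style generators: `e true i = x_i^+`, `e false i = x_i^-`,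
`t true i = t_i`, `t false i = t_i⁻¹`. -/
inductive DJGen (I : Type) : Type
  | e : Bool → I → DJGen I
  | t : Bool → I → DJGen I

abbrev DJF (I : Type) := FreeAlgebra 𝕂 (DJGen I)

namespace DJF
variable {I : Type}
def e (b : Bool) (i : I) : DJF I := FreeAlgebra.ι 𝕂 (DJGen.e b i)
def t (i : I) : DJF I := FreeAlgebra.ι 𝕂 (DJGen.t true i)
def tinv (i : I) : DJF I := FreeAlgebra.ι 𝕂 (DJGen.t false i)
end DJF

/-- Defining relations of the Drinfeld–Jimbo quantum group `U_q(𝔰)`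
(Definition of the quantum group). -/
inductive DJRel {I : Type} (g : GCM I) : DJF I → DJF I → Prop
  | t_inv (b : Bool) (i : I) :
      DJRel g (FreeAlgebra.ι 𝕂 (DJGen.t b i) * FreeAlgebra.ι 𝕂 (DJGen.t (!b) i)) 1
  | tt (b b' : Bool) (i j : I) :
      DJRel g (FreeAlgebra.ι 𝕂 (DJGen.t b i) * FreeAlgebra.ι 𝕂 (DJGen.t b' j))
        (FreeAlgebra.ι 𝕂 (DJGen.t b' j) * FreeAlgebra.ι 𝕂 (DJGen.t b i))
  /- `t_i x_j^± t_i⁻¹ = q_i^{± a_{ij}} x_j^±` -/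
  | te (b : Bool) (i j : I) :
      DJRel g (DJF.t i * DJF.e b j * DJF.tinv i)
        ((g.qi i ^ (cond b (g.A i j) (-(g.A i j)))) • DJF.e b j)
  /- `[x_i^+, x_j^-] = δ_{ij} (t_i - t_i⁻¹)/(q_i - q_i⁻¹)` -/
  | ef (i j : I) :
      DJRel g (DJF.e true i * DJF.e false j - DJF.e false j * DJF.e true i)
        (if i = j then ((g.qi i - (g.qi i)⁻¹)⁻¹) • (DJF.t i - DJF.tinv i) else 0)
  /- quantum Serre relations `Σ (-1)^s (x_i^±)^{(s)} x_j^± (x_i^±)^{(1-a_{ij}-s)} = 0` -/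
  | serre (b : Bool) (i j : I) (hij : i ≠ j) :
      DJRel g (∑ s ∈ Finset.range ((1 - g.A i j).toNat + 1),
        (((-1 : 𝕂) ^ s) * (qfact (g.qi i) s)⁻¹ * (qfact (g.qi i) ((1 - g.A i j).toNat - s))⁻¹) •
          (DJF.e b i ^ s * DJF.e b j * DJF.e b i ^ ((1 - g.A i j).toNat - s))) 0

/-- The Drinfeld–Jimbo quantum group `U_q(𝔰)` of the Kac–Moody algebra with
generalized Cartan matrix `g`. -/
abbrev QG {I : Type} (g : GCM I) : Type := RingQuot (DJRel g)

namespace QG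
variable {I : Type} (g : GCM I)
def mk : DJF I →ₐ[𝕂] QG g := RingQuot.mkAlgHom 𝕂 (DJRel g)
def e (b : Bool) (i : I) : QG g := mk g (DJF.e b i)
def t (i : I) : QG g := mk g (DJF.t i)
def tinv (i : I) : QG g := mk g (DJF.tinv i)
def tpow (i : I) (m : ℤ) : QG g := if 0 ≤ m then t g i ^ m.toNat else tinv g i ^ (-m).toNat
end QG

end QTor

namespace QTor
open scoped Classical

/-! ### Affine Cartan data and the quantum toroidal algebra -/

/-- An (indecomposable) affine generalized Cartan matrix on the node set
`I = {0, 1, …, n}`, encoded by the existence of a positive integral null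
vector (the marks `a_i`), connectedness of the Dynkin diagram, and the
condition `a_{ij} a_{ji} ≤ 3` excluding types `A₁⁽¹⁾` and `A₂⁽²⁾`. -/
structure AffData (n : ℕ) where
  g : GCM (Fin (n + 1))
  mark : Fin (n + 1) → ℤ
  mark_pos : ∀ i, 0 < mark i
  null : ∀ i, ∑ j, g.A i j * mark j = 0
  connected : ∀ i j, Relation.ReflTransGen (fun a b => g.A a b ≠ 0) i j
  small : ∀ ⦃i j⦄, i ≠ j → g.A i j * g.A j i ≤ 3

/-- simply laced untwisted affine type (`A_n⁽¹⁾ (n ≥ 2)`, `D_n⁽¹⁾`, `E⁽¹⁾`). -/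
def AffData.SimplyLaced {n : ℕ} (D : AffData n) : Prop :=
  (∀ i, D.g.d i = 1) ∧ ∀ ⦃i j⦄, i ≠ j → -1 ≤ D.g.A i j

/-- The finite part of an affine GCM: the principal submatrix on `I₀ = {1,…,n}`. -/
def finGCM {n : ℕ} (g : GCM (Fin (n + 1))) : GCM (Fin n) where
  A i j := g.A i.succ j.succ
  d i := g.d i.succ
  diag i := g.diag _
  offdiag i j hij := g.offdiag (fun hc => hij (Fin.succ_injective _ hc))
  dpos i := g.dpos _
  sym i j := g.sym _ _

namespace QA
variable {n : ℕ} (D : AffData n)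
/-- the central element `k₀^{a₀} k₁^{a₁} ⋯ k_n^{a_n}`. -/
def kmark : QA D.g := (List.ofFn fun i => QA.kpow D.g i (D.mark i)).prod
/-- `(k₀^{a₀} ⋯ k_n^{a_n})⁻¹`. -/
def kmarkinv : QA D.g := (List.ofFn fun i => QA.kpow D.g i (-(D.mark i))).prod
/-- `k_θ = k₁^{a₁} ⋯ k_n^{a_n}`. -/
def ktheta : QA D.g := (List.ofFn fun i : Fin n => QA.kpow D.g i.succ (D.mark i.succ)).prod
/-- `k_θ⁻¹`. -/
def kthetainv : QA D.g := (List.ofFn fun i : Fin n => QA.kpow D.g i.succ (-(D.mark i.succ))).prod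
end QA

/-- `h : U_q(ĝ) → U_q(g_tor)` is the horizontal homomorphism:
`x_i^± ↦ x^±_{i,0}`, `t_i ↦ k_i` for all `i ∈ I`. -/
def IsHoriz {n : ℕ} (D : AffData n) (h : QG D.g →ₐ[𝕂] QA D.g) : Prop :=
  (∀ b i, h (QG.e D.g b i) = QA.x D.g b i 0) ∧
  (∀ i, h (QG.t D.g i) = QA.k D.g i) ∧
  (∀ i, h (QG.tinv D.g i) = QA.kinv D.g i)

/-- `v : U_q(Z_n⁽¹⁾) → U_q(g_tor)` is the vertical homomorphism from the
quantum affine algebra in its Drinfeld new realization (the quantum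
affinization of the finite part): `x^±_{i,m} ↦ x^±_{i,m}`, `h_{i,r} ↦ h_{i,r}`,
`k_i ↦ k_i`, `C ↦ C` for `i ∈ I₀`. -/
def IsVert {n : ℕ} (D : AffData n) (v : QA (finGCM D.g) →ₐ[𝕂] QA D.g) : Prop :=
  (∀ b (i : Fin n) m, v (QA.x (finGCM D.g) b i m) = QA.x D.g b i.succ m) ∧
  (∀ (i : Fin n) r, v (QA.h (finGCM D.g) i r) = QA.h D.g i.succ r) ∧
  (∀ i : Fin n, v (QA.k (finGCM D.g) i) = QA.k D.g i.succ) ∧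
  (∀ i : Fin n, v (QA.kinv (finGCM D.g) i) = QA.kinv D.g i.succ) ∧
  (v (QA.c (finGCM D.g)) = QA.c D.g) ∧ (v (QA.cinv (finGCM D.g)) = QA.cinv D.g)

/-- a length function `o : I → {±1}` with `o(i) = -o(j)` whenever `a_{ij} < 0`. -/
def IsLengthFun {n : ℕ} (D : AffData n) (o : Fin (n + 1) → 𝕂) : Prop :=
  (∀ i, o i = 1 ∨ o i = -1) ∧ ∀ ⦃i j⦄, D.g.A i j < 0 → o j = -o i

end QTor

namespace QTor
open scoped Classical
open MulOpposite

/-! ### Standard (anti-)automorphisms of quantum affinizations,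
characterised by their values on generators. -/

/-- `η` is the anti-involution of the quantum affinization with
`η(x^±_{i,m}) = x^±_{i,-m}`, `η(h_{i,r}) = -C^r h_{i,-r}`, `η(k_i) = k_i⁻¹`,
`η(C) = C`, encoded as an algebra map into the opposite algebra. -/
def IsEta {I : Type} (g : GCM I) (η : QA g →ₐ[𝕂] (QA g)ᵐᵒᵖ) : Prop :=
  (∀ b i m, η (QA.x g b i m) = op (QA.x g b i (-m))) ∧
  (∀ i r, η (QA.h g i r) = op (-(QA.cpow g r * QA.h g i (-r)))) ∧
  (∀ i, η (QA.k g i) = op (QA.kinv g i)) ∧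
  (∀ i, η (QA.kinv g i) = op (QA.k g i)) ∧
  (η (QA.c g) = op (QA.c g)) ∧ (η (QA.cinv g) = op (QA.cinv g))

/-- `σ` is the anti-involution of the Drinfeld–Jimbo quantum group with
`σ(x_j^±) = x_j^±` and `σ(t_j) = t_j⁻¹`. -/
def IsSigma {I : Type} (g : GCM I) (σ : QG g →ₐ[𝕂] (QG g)ᵐᵒᵖ) : Prop :=
  (∀ b i, σ (QG.e g b i) = op (QG.e g b i)) ∧
  (∀ i, σ (QG.t g i) = op (QG.tinv g i)) ∧
  (∀ i, σ (QG.tinv g i) = op (QG.t g i))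

/-- Lusztig's braid group automorphism `T_i` of the Drinfeld–Jimbo quantum
group, determined by its values on the Chevalley generators. -/
def IsBraidDJ {I : Type} (g : GCM I) (i : I) (T : QG g ≃ₐ[𝕂] QG g) : Prop :=
  (∀ j, T (QG.t g j) = QG.t g j * QG.tpow g i (-(g.A i j))) ∧
  (T (QG.e g true i) = -(QG.e g false i * QG.t g i)) ∧
  (T (QG.e g false i) = -(QG.tinv g i * QG.e g true i)) ∧
  (∀ j, j ≠ i →
    T (QG.e g true j) =
      ∑ s ∈ Finset.range ((-(g.A i j)).toNat + 1),
        (((-1 : 𝕂) ^ s) * ((g.qi i)⁻¹) ^ s *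
          (qfact (g.qi i) ((-(g.A i j)).toNat - s))⁻¹ * (qfact (g.qi i) s)⁻¹) •
          (QG.e g true i ^ ((-(g.A i j)).toNat - s) * QG.e g true j * QG.e g true i ^ s)) ∧
  (∀ j, j ≠ i →
    T (QG.e g false j) =
      ∑ s ∈ Finset.range ((-(g.A i j)).toNat + 1),
        (((-1 : 𝕂) ^ s) * (g.qi i) ^ s *
          (qfact (g.qi i) s)⁻¹ * (qfact (g.qi i) ((-(g.A i j)).toNat - s))⁻¹) •
          (QG.e g false i ^ s * QG.e g false j * QG.e g false i ^ ((-(g.A i j)).toNat - s)))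

/-- The braid operator `𝒯_i` of a quantum affinization (Proposition
`Ti properties`), determined by its values on the generators of the finite
Drinfeld new style presentation. -/
def IsBraidDN {I : Type} (g : GCM I) (i : I) (T : QA g ≃ₐ[𝕂] QA g) : Prop :=
  (T (QA.c g) = QA.c g) ∧ (T (QA.cinv g) = QA.cinv g) ∧
  (∀ j, T (QA.k g j) = QA.k g j * QA.kpow g i (-(g.A i j))) ∧
  (T (QA.x g true i 0) = -(QA.x g false i 0 * QA.k g i)) ∧
  (T (QA.x g false i 0) = -(QA.kinv g i * QA.x g true i 0)) ∧
  (T (QA.x g true i (-1)) =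
    ∑ s ∈ Finset.range 3,
      (((-1 : 𝕂) ^ s) * (g.qi i) ^ s * (qfact (g.qi i) s)⁻¹ * (qfact (g.qi i) (2 - s))⁻¹) •
        (QA.x g false i 0 ^ s * QA.x g true i (-1) * QA.x g false i 0 ^ (2 - s) * QA.k g i)) ∧
  (T (QA.x g false i 1) =
    ∑ s ∈ Finset.range 3,
      (((-1 : 𝕂) ^ s) * ((g.qi i)⁻¹) ^ s * (qfact (g.qi i) (2 - s))⁻¹ * (qfact (g.qi i) s)⁻¹) •
        (QA.kinv g i * (QA.x g true i 0 ^ (2 - s) * QA.x g false i 1 * QA.x g true i 0 ^ s))) ∧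
  (∀ j, j ≠ i → ∀ m,
    T (QA.x g true j m) =
      ∑ s ∈ Finset.range ((-(g.A i j)).toNat + 1),
        (((-1 : 𝕂) ^ s) * ((g.qi i)⁻¹) ^ s *
          (qfact (g.qi i) ((-(g.A i j)).toNat - s))⁻¹ * (qfact (g.qi i) s)⁻¹) •
          (QA.x g true i 0 ^ ((-(g.A i j)).toNat - s) * QA.x g true j m * QA.x g true i 0 ^ s)) ∧
  (∀ j, j ≠ i → ∀ m,
    T (QA.x g false j m) =
      ∑ s ∈ Finset.range ((-(g.A i j)).toNat + 1),
        (((-1 : 𝕂) ^ s) * (g.qi i) ^ s *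
          (qfact (g.qi i) s)⁻¹ * (qfact (g.qi i) ((-(g.A i j)).toNat - s))⁻¹) •
          (QA.x g false i 0 ^ s * QA.x g false j m * QA.x g false i 0 ^ ((-(g.A i j)).toNat - s)))

/-- The automorphism `𝒳_i` of a quantum affinization:
`x^±_{j,m} ↦ o(j)^{δ_{ij}} x^±_{j,m∓δ_{ij}}`, `k_j ↦ C^{-δ_{ij}} k_j`,
`h_{j,r} ↦ h_{j,r}`, `C ↦ C`. -/
def IsXAut {I : Type} (g : GCM I) (o : I → 𝕂) (i : I) (X : QA g ≃ₐ[𝕂] QA g) : Prop :=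
  (∀ b j m, X (QA.x g b j m) =
    if j = i then o j • QA.x g b j (m - cond b 1 (-1)) else QA.x g b j m) ∧
  (∀ j, X (QA.k g j) = if j = i then QA.cinv g * QA.k g j else QA.k g j) ∧
  (∀ j, X (QA.kinv g j) = if j = i then QA.c g * QA.kinv g j else QA.kinv g j) ∧
  (∀ j r, X (QA.h g j r) = QA.h g j r) ∧
  (X (QA.c g) = QA.c g) ∧ (X (QA.cinv g) = QA.cinv g)

/-- The automorphism `𝒮_π` of a quantum affinization attached to a diagram
automorphism `π`, relative to a sign function `os i j = o(i)/o(j)`: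
`x^±_{i,m} ↦ o_{i,π(i)}^m x^±_{π(i),m}`, `k_i ↦ k_{π(i)}`,
`h_{i,r} ↦ o_{i,π(i)}^r h_{π(i),r}`, `C ↦ C`. -/
def IsSPi {I : Type} (g : GCM I) (os : I → I → 𝕂) (π : Equiv.Perm I)
    (S : QA g ≃ₐ[𝕂] QA g) : Prop :=
  (∀ b i m, S (QA.x g b i m) = os i (π i) ^ m • QA.x g b (π i) m) ∧
  (∀ i, S (QA.k g i) = QA.k g (π i)) ∧
  (∀ i, S (QA.kinv g i) = QA.kinv g (π i)) ∧
  (∀ i r, S (QA.h g i r) = os i (π i) ^ r • QA.h g (π i) r) ∧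
  (S (QA.c g) = QA.c g) ∧ (S (QA.cinv g) = QA.cinv g)

/-- The sign automorphism `ζ_i`, sending `x^±_{i,m} ↦ -x^±_{i,m}` and fixing
all other generators. -/
def IsZeta {I : Type} (g : GCM I) (i : I) (Z : QA g ≃ₐ[𝕂] QA g) : Prop :=
  (∀ b j m, Z (QA.x g b j m) = if j = i then -QA.x g b j m else QA.x g b j m) ∧
  (∀ j r, Z (QA.h g j r) = QA.h g j r) ∧
  (∀ j, Z (QA.k g j) = QA.k g j) ∧ (∀ j, Z (QA.kinv g j) = QA.kinv g j) ∧
  (Z (QA.c g) = QA.c g) ∧ (Z (QA.cinv g) = QA.cinv g)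

end QTor

namespace QTor
open scoped Classical
open MulOpposite

/-! ### Jing's isomorphism data (simply laced case) -/

/-- Condition (3.1) on the sequences used in Jing's isomorphism:
`Σ_{t ≤ s} (α_{i_t}, α_{i_{s+1}}) = ε_s`, with `(α_i, α_j) = d_i a_{ij}`. -/
def SeqCond {n : ℕ} (D : AffData n) (m : ℕ) (iseq : Fin (m + 1) → Fin n)
    (es : Fin m → ℤ) : Prop :=
  ((m : ℤ) + 2 = ∑ i, D.mark i) ∧
  ∀ s : Fin m,
    (∑ t : Fin (s.val + 1),
      ((D.g.d (iseq (Fin.castLE (Nat.succ_le_succ (le_of_lt s.isLt)) t)).succ : ℤ) *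
        D.g.A (iseq (Fin.castLE (Nat.succ_le_succ (le_of_lt s.isLt)) t)).succ
          (iseq s.succ).succ))
      = es s

/-- The image of `x₀^+` under Jing's isomorphism (simply laced case):
`[x^-_{i_{h-1},0}, …, x^-_{i_2,0}, x^-_{i_1,1}]_{q^{ε₁} ⋯ q^{ε_{h-2}}} C k_θ⁻¹`. -/
def jingXp {n : ℕ} (D : AffData n) (m : ℕ) (iseq : Fin (m + 1) → Fin n)
    (es : Fin m → ℤ) : QA D.g :=
  twc (List.ofFn fun t : Fin m =>
        ((q : 𝕂) ^ es t.rev, QA.x D.g false (iseq t.rev.succ).succ 0))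
      (QA.x D.g false (iseq 0).succ 1) * (QA.c D.g * QA.kthetainv D)

/-- The image of `x₀^-` under Jing's isomorphism (simply laced case, so the
constant `a = 1`): `(-q)^{-ε} C⁻¹ k_θ [x^+_{i_{h-1},0}, …, x^+_{i_1,-1}]`. -/
def jingXm {n : ℕ} (D : AffData n) (m : ℕ) (iseq : Fin (m + 1) → Fin n)
    (es : Fin m → ℤ) : QA D.g :=
  ((-q : 𝕂) ^ (-(∑ t, es t))) •
    (QA.cinv D.g * QA.ktheta D *
      twc (List.ofFn fun t : Fin m =>
            ((q : 𝕂) ^ es t.rev, QA.x D.g true (iseq t.rev.succ).succ 0))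
          (QA.x D.g true (iseq 0).succ (-1)))

/-- `v ∘ J : U_q(ĝ) → U_q(g_tor)`: the vertical homomorphism precomposed
with Jing's isomorphism, i.e. the vertical copy of the Drinfeld–Jimbo
quantum affine algebra.  The values on `x₀^±` are given by Jing's twisted
commutator formulas (valid for any sequence satisfying (3.1)). -/
def IsVertDJ {n : ℕ} (D : AffData n) (vd : QG D.g →ₐ[𝕂] QA D.g) : Prop :=
  (∀ b (i : Fin n), vd (QG.e D.g b i.succ) = QA.x D.g b i.succ 0) ∧
  (∀ i : Fin n, vd (QG.t D.g i.succ) = QA.k D.g i.succ) ∧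
  (∀ i : Fin n, vd (QG.tinv D.g i.succ) = QA.kinv D.g i.succ) ∧
  (vd (QG.t D.g 0) = QA.c D.g * QA.kthetainv D) ∧
  (vd (QG.tinv D.g 0) = QA.ktheta D * QA.cinv D.g) ∧
  (∀ m iseq es, SeqCond D m iseq es → vd (QG.e D.g true 0) = jingXp D m iseq es) ∧
  (∀ m iseq es, SeqCond D m iseq es → vd (QG.e D.g false 0) = jingXm D m iseq es)

/-- finite-side versions of the Jing elements (inside `U_q(Z_n⁽¹⁾)` in its
Drinfeld new realization). -/
def jingXpF {n : ℕ} (D : AffData n) (m : ℕ) (iseq : Fin (m + 1) → Fin n)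
    (es : Fin m → ℤ) : QA (finGCM D.g) :=
  twc (List.ofFn fun t : Fin m =>
        ((q : 𝕂) ^ es t.rev, QA.x (finGCM D.g) false (iseq t.rev.succ) 0))
      (QA.x (finGCM D.g) false (iseq 0) 1) *
    (QA.c (finGCM D.g) *
      (List.ofFn fun i : Fin n => QA.kpow (finGCM D.g) i (-(D.mark i.succ))).prod)

def jingXmF {n : ℕ} (D : AffData n) (m : ℕ) (iseq : Fin (m + 1) → Fin n)
    (es : Fin m → ℤ) : QA (finGCM D.g) :=
  ((-q : 𝕂) ^ (-(∑ t, es t))) •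
    (QA.cinv (finGCM D.g) *
      (List.ofFn fun i : Fin n => QA.kpow (finGCM D.g) i (D.mark i.succ)).prod *
      twc (List.ofFn fun t : Fin m =>
            ((q : 𝕂) ^ es t.rev, QA.x (finGCM D.g) true (iseq t.rev.succ) 0))
          (QA.x (finGCM D.g) true (iseq 0) (-1)))

/-- Jing's isomorphism `J : U_q(ĝ) (Drinfeld–Jimbo) ≅ U_q(ĝ) (Drinfeld new)`,
determined by `x_i^± ↦ x^±_{i,0}`, `t_i ↦ k_i` for `i ∈ I₀`, `t₀ ↦ C k_θ⁻¹`,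
and by the twisted-commutator formulas on `x₀^±`. -/
def IsJing {n : ℕ} (D : AffData n) (J : QG D.g ≃ₐ[𝕂] QA (finGCM D.g)) : Prop :=
  (∀ b (i : Fin n), J (QG.e D.g b i.succ) = QA.x (finGCM D.g) b i 0) ∧
  (∀ i : Fin n, J (QG.t D.g i.succ) = QA.k (finGCM D.g) i) ∧
  (∀ i : Fin n, J (QG.tinv D.g i.succ) = QA.kinv (finGCM D.g) i) ∧
  (J (QG.t D.g 0) = QA.c (finGCM D.g) *
    (List.ofFn fun i : Fin n => QA.kpow (finGCM D.g) i (-(D.mark i.succ))).prod) ∧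
  (J (QG.tinv D.g 0) =
    (List.ofFn fun i : Fin n => QA.kpow (finGCM D.g) i (D.mark i.succ)).prod *
      QA.cinv (finGCM D.g)) ∧
  (∀ m iseq es, SeqCond D m iseq es → J (QG.e D.g true 0) = jingXpF D m iseq es) ∧
  (∀ m iseq es, SeqCond D m iseq es → J (QG.e D.g false 0) = jingXmF D m iseq es)

end QTor

namespace QTor
open scoped Classical

/-! ### The extended double affine braid group -/

/-- The lattice `P̊^∨` of finite coweights, in coordinates with respect to the
fundamental coweights `ω_1^∨, …, ω_n^∨`. -/
abbrev Lat (n : ℕ) := Fin n →₀ ℤ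

/-- The pairing `(β, α_i)` of a finite coweight with the affine simple roots
(with respect to the level-zero embedding `ω_i^∨ ↦ a₀ λ_i^∨ - a_i λ₀^∨`). -/
def pr {n : ℕ} (D : AffData n) (β : Lat n) (i : Fin (n + 1)) : ℤ :=
  if h : i = 0 then -(∑ j, D.mark j.succ * β j) else D.mark 0 * β (i.pred h)

/-- `cv i` is the projection of the coroot `α_i^∨` to `P̊^∨`, characterised by
`a₀ (cv i)_k = a_{ik}`. -/
def CvecOK {n : ℕ} (D : AffData n) (cv : Fin (n + 1) → Lat n) : Prop :=
  ∀ i k, D.mark 0 * cv i k = D.g.A i k.succ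

/-- The simple reflection `s_i(β) = β - (β, α_i) · (proj α_i^∨)` acting on `P̊^∨`. -/
def srefl {n : ℕ} (D : AffData n) (cv : Fin (n + 1) → Lat n) (i : Fin (n + 1))
    (β : Lat n) : Lat n :=
  β - pr D β i • cv i

/-- `ω_i^∨` as an element of `P̊^∨` (with the convention `ω₀^∨ = 0`). -/
def omBase {n : ℕ} (i : Fin (n + 1)) : Lat n :=
  if h : i = 0 then 0 else Finsupp.single (i.pred h) 1

/-- The linear action of a diagram automorphism `π` on `P̊^∨`:
`π(ω_i^∨) = ω_{π(i)}^∨ - a_i ω_{π(0)}^∨`. -/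
def omLat {n : ℕ} (D : AffData n) (π : Equiv.Perm (Fin (n + 1))) (β : Lat n) : Lat n :=
  ∑ j : Fin n, β j • (omBase (π j.succ) - D.mark j.succ • omBase (π 0))

/-- `Ω` is (a realisation of) the group of outer automorphisms of the affine
Dynkin diagram: it acts faithfully by diagram automorphisms, only the
identity fixes the node `0`, and it meets every orbit of `0` under
diagram automorphisms. -/
def IsOuterGroup {n : ℕ} (D : AffData n) {Ω : Type} [Group Ω]
    (ρ : Ω →* Equiv.Perm (Fin (n + 1))) : Prop :=
  Function.Injective ρ ∧
  (∀ ω : Ω, ∀ i j, D.g.A (ρ ω i) (ρ ω j) = D.g.A i j) ∧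
  (∀ ω : Ω, ω ≠ 1 → ρ ω 0 ≠ 0) ∧
  (∀ π : Equiv.Perm (Fin (n + 1)), (∀ i j, D.g.A (π i) (π j) = D.g.A i j) →
    ∃ ω : Ω, ρ ω 0 = π 0)

/-- Generators of the extended double affine braid group `B̈`: the Coxeter
generators `T_i (i ∈ I)`, the lattice `{X_β : β ∈ P̊^∨}` and the group `Ω`. -/
inductive DGen (n : ℕ) (Ω : Type) : Type
  | T : Fin (n + 1) → DGen n Ω
  | Xl : Lat n → DGen n Ω
  | pi : Ω → DGen n Ω

/-- alternating word `x y x y ⋯` of length `m`. -/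
def altWord {G : Type} [Monoid G] (x y : G) : ℕ → G
  | 0 => 1
  | m + 1 => x * altWord y x m

/-- The defining relations of the extended double affine braid group `B̈`. -/
inductive DRel {n : ℕ} (D : AffData n) (cv : Fin (n + 1) → Lat n) {Ω : Type} [Group Ω]
    (ρ : Ω →* Equiv.Perm (Fin (n + 1))) : FreeGroup (DGen n Ω) → Prop
  /- braid relations, with `a_{ij} a_{ji} + 2` factors on each side -/
  | braid (i j : Fin (n + 1)) (hij : i ≠ j) :
      DRel D cv ρ
        (altWord (FreeGroup.of (DGen.T i)) (FreeGroup.of (DGen.T j))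
            ((D.g.A i j * D.g.A j i).toNat + 2) *
          (altWord (FreeGroup.of (DGen.T j)) (FreeGroup.of (DGen.T i))
            ((D.g.A i j * D.g.A j i).toNat + 2))⁻¹)
  /- `X_β X_γ = X_{β+γ}` -/
  | latt (β γ : Lat n) :
      DRel D cv ρ (FreeGroup.of (DGen.Xl β) * FreeGroup.of (DGen.Xl γ) *
        (FreeGroup.of (DGen.Xl (β + γ)))⁻¹)
  /- `T_i X_β = X_β T_i` if `(β, α_i) = 0` -/
  | tx0 (i : Fin (n + 1)) (β : Lat n) (h : pr D β i = 0) :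
      DRel D cv ρ (FreeGroup.of (DGen.T i) * FreeGroup.of (DGen.Xl β) *
        (FreeGroup.of (DGen.T i))⁻¹ * (FreeGroup.of (DGen.Xl β))⁻¹)
  /- `T_i⁻¹ X_β T_i⁻¹ = X_{s_i(β)}` if `(β, α_i) = 1` -/
  | tx1 (i : Fin (n + 1)) (β : Lat n) (h : pr D β i = 1) :
      DRel D cv ρ ((FreeGroup.of (DGen.T i))⁻¹ * FreeGroup.of (DGen.Xl β) *
        (FreeGroup.of (DGen.T i))⁻¹ * (FreeGroup.of (DGen.Xl (srefl D cv i β)))⁻¹)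
  /- `π T_i π⁻¹ = T_{π(i)}` -/
  | piT (ω : Ω) (i : Fin (n + 1)) :
      DRel D cv ρ (FreeGroup.of (DGen.pi ω) * FreeGroup.of (DGen.T i) *
        (FreeGroup.of (DGen.pi ω))⁻¹ * (FreeGroup.of (DGen.T (ρ ω i)))⁻¹)
  /- `π X_β π⁻¹ = X_{π(β)}` -/
  | piX (ω : Ω) (β : Lat n) :
      DRel D cv ρ (FreeGroup.of (DGen.pi ω) * FreeGroup.of (DGen.Xl β) *
        (FreeGroup.of (DGen.pi ω))⁻¹ * (FreeGroup.of (DGen.Xl (omLat D (ρ ω) β)))⁻¹)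
  /- the generators indexed by `Ω` multiply as in `Ω` -/
  | pimul (ω ω' : Ω) :
      DRel D cv ρ (FreeGroup.of (DGen.pi ω) * FreeGroup.of (DGen.pi ω') *
        (FreeGroup.of (DGen.pi (ω * ω')))⁻¹)

/-- The extended double affine braid group `B̈`, presented by the generators
`T_i`, `X_β`, `Ω` and the relations above. -/
abbrev BDD {n : ℕ} (D : AffData n) (cv : Fin (n + 1) → Lat n) {Ω : Type} [Group Ω]
    (ρ : Ω →* Equiv.Perm (Fin (n + 1))) : Type :=
  PresentedGroup {w | DRel D cv ρ w}

namespace BDD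
variable {n : ℕ} (D : AffData n) (cv : Fin (n + 1) → Lat n) {Ω : Type} [Group Ω]
  (ρ : Ω →* Equiv.Perm (Fin (n + 1)))
def T (i : Fin (n + 1)) : BDD D cv ρ := PresentedGroup.of (DGen.T i)
def X (β : Lat n) : BDD D cv ρ := PresentedGroup.of (DGen.Xl β)
def pi (ω : Ω) : BDD D cv ρ := PresentedGroup.of (DGen.pi ω)
/-- the braid lift `T_{s_{i_1}} ⋯ T_{s_{i_p}}` of a word in `W₀`. -/
def wordT (l : List (Fin n)) : BDD D cv ρ := (l.map fun j => T D cv ρ j.succ).prod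
end BDD

/-- row of the finite Cartan matrix, as an element of the lattice. -/
def finRow {n : ℕ} (D : AffData n) (i : Fin n) : Lat n :=
  Finsupp.equivFunOnFinite.symm fun k => D.g.A i.succ k.succ

/-- the finite simple reflection `s_i`, `i ∈ I₀`, acting on `P̊^∨`
(untwisted normalisation). -/
def sF {n : ℕ} (D : AffData n) (i : Fin n) (β : Lat n) : Lat n := β - β i • finRow D i

/-- action of a word `s_{i_1} ⋯ s_{i_p}` in the finite Weyl group on `P̊^∨`. -/
def wordAct {n : ℕ} (D : AffData n) (l : List (Fin n)) (β : Lat n) : Lat n :=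
  l.foldr (fun i x => sF D i x) β

/-- Data pinning down the involution `𝔱` of `B̈`, which inverts `T_1,…,T_n`
and interchanges `X_β` with `Y_β` (hence `T₀` with `(T₀^v)⁻¹` and `π_i` with
`ρ_i = X_{ω_i^∨} T_{v_i}⁻¹`).  Since `B̈` is generated by `T_0,…,T_n` and `Ω`,
the listed values determine `𝔱`. -/
structure TInvData {n : ℕ} (D : AffData n) (cv : Fin (n + 1) → Lat n) {Ω : Type} [Group Ω]
    (ρ : Ω →* Equiv.Perm (Fin (n + 1))) where
  toMap : BDD D cv ρ →* BDD D cv ρ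
  /-- coordinates of `θ^∨` -/
  thetaCo : Lat n
  /-- a reduced word for `s_θ` -/
  wtheta : List (Fin n)
  /-- a reduced word for `v_i = w₀ w_{0i}` for each element of `Ω` -/
  vword : Ω → List (Fin n)
  theta_spec : ∀ k, thetaCo k = -(D.g.A 0 k.succ)
  wtheta_act : ∀ β, wordAct D wtheta β = β - (∑ k, D.mark k.succ * β k) • thetaCo
  wtheta_min : ∀ l : List (Fin n),
    (∀ β, wordAct D l β = β - (∑ k, D.mark k.succ * β k) • thetaCo) →
    wtheta.length ≤ l.length
  vword_act : ∀ ω β, wordAct D (vword ω) β = omLat D (ρ ω) β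
  vword_min : ∀ ω, ∀ l : List (Fin n),
    (∀ β, wordAct D l β = omLat D (ρ ω) β) → (vword ω).length ≤ l.length
  /-- `𝔱(T_i) = T_i⁻¹` for `i ∈ I₀` -/
  maps_T : ∀ i : Fin n, toMap (BDD.T D cv ρ i.succ) = (BDD.T D cv ρ i.succ)⁻¹
  /-- `𝔱(T₀) = (T₀^v)⁻¹ = (X_{θ^∨} T_{s_θ}⁻¹)⁻¹` -/
  maps_T0 : toMap (BDD.T D cv ρ 0) =
    (BDD.X D cv ρ thetaCo * (BDD.wordT D cv ρ wtheta)⁻¹)⁻¹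
  /-- `𝔱(π) = ρ_π = X_{ω_{π(0)}^∨} T_{v_π}⁻¹` -/
  maps_pi : ∀ ω : Ω, toMap (BDD.pi D cv ρ ω) =
    BDD.X D cv ρ (omBase (ρ ω 0)) * (BDD.wordT D cv ρ (vword ω))⁻¹
  involutive : ∀ b, toMap (toMap b) = b

/-- The action of `B̈` on the quantum toroidal algebra from the main theorem:
`T_i` acts by `𝒯_i`, `X_{ω_i^∨}` by `𝒳_i 𝒳₀^{-a_i}` and `π ∈ Ω` by `𝒮_π`. -/
def IsToroidalAction {n : ℕ} (D : AffData n) (o : Fin (n + 1) → 𝕂)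
    (cv : Fin (n + 1) → Lat n) {Ω : Type} [Group Ω]
    (ρ : Ω →* Equiv.Perm (Fin (n + 1)))
    (Θ : BDD D cv ρ →* (QA D.g ≃ₐ[𝕂] QA D.g)) : Prop :=
  (∀ i, IsBraidDN D.g i (Θ (BDD.T D cv ρ i))) ∧
  (∀ i : Fin n, ∃ X0 Xi : QA D.g ≃ₐ[𝕂] QA D.g, IsXAut D.g o 0 X0 ∧
      IsXAut D.g o i.succ Xi ∧
      Θ (BDD.X D cv ρ (Finsupp.single i 1)) = Xi * X0 ^ (-(D.mark i.succ))) ∧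
  (∀ ω : Ω, IsSPi D.g (fun a b => o a / o b) (ρ ω) (Θ (BDD.pi D cv ρ ω)))

end QTor

namespace QTor
open scoped Classical

/-! ### The finite Drinfeld new style presentation -/

/-- Generators of the finite presentation: `x0 b i = x^±_{i,0}`,
`x1 true i = x^+_{i,-1}`, `x1 false i = x^-_{i,1}`, `k`, `k⁻¹`, `C^{±1}`. -/
inductive FGen (I : Type) : Type
  | x0 : Bool → I → FGen I
  | x1 : Bool → I → FGen I
  | k : Bool → I → FGen I
  | c : Bool → FGen I

abbrev FF (I : Type) := FreeAlgebra 𝕂 (FGen I)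

namespace FF
variable {I : Type}
def x0 (b : Bool) (i : I) : FF I := FreeAlgebra.ι 𝕂 (FGen.x0 b i)
def x1 (b : Bool) (i : I) : FF I := FreeAlgebra.ι 𝕂 (FGen.x1 b i)
def k (i : I) : FF I := FreeAlgebra.ι 𝕂 (FGen.k true i)
def kinv (i : I) : FF I := FreeAlgebra.ι 𝕂 (FGen.k false i)
def c : FF I := FreeAlgebra.ι 𝕂 (FGen.c true)
def cinv : FF I := FreeAlgebra.ι 𝕂 (FGen.c false)
end FF

/-- The finitely many relations (i)–(xi) of Lemma `lemma for new toroidal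
presentation` / Proposition `simpler toroidal presentation`. -/
inductive FinRel {I : Type} (g : GCM I) : FF I → FF I → Prop
  /- (i) `C^{±1}` central -/
  | c_comm (b : Bool) (a : FGen I) :
      FinRel g (FreeAlgebra.ι 𝕂 (FGen.c b) * FreeAlgebra.ι 𝕂 a)
        (FreeAlgebra.ι 𝕂 a * FreeAlgebra.ι 𝕂 (FGen.c b))
  /- (ii) `C^{±1} C^{∓1} = k_i^{±1} k_i^{∓1} = 1` -/
  | c_inv (b : Bool) :
      FinRel g (FreeAlgebra.ι 𝕂 (FGen.c b) * FreeAlgebra.ι 𝕂 (FGen.c (!b))) 1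
  | k_inv (b : Bool) (i : I) :
      FinRel g (FreeAlgebra.ι 𝕂 (FGen.k b i) * FreeAlgebra.ι 𝕂 (FGen.k (!b) i)) 1
  /- (iii) `[k_i, k_j] = 0` -/
  | kk (b b' : Bool) (i j : I) :
      FinRel g (FreeAlgebra.ι 𝕂 (FGen.k b i) * FreeAlgebra.ι 𝕂 (FGen.k b' j))
        (FreeAlgebra.ι 𝕂 (FGen.k b' j) * FreeAlgebra.ι 𝕂 (FGen.k b i))
  /- (iv) `k_i x^±_{j,m} k_i⁻¹ = q_i^{± a_{ij}} x^±_{j,m}` for `m = 0, ∓1` -/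
  | kx0 (b : Bool) (i j : I) :
      FinRel g (FF.k i * FF.x0 b j * FF.kinv i)
        ((g.qi i ^ (cond b (g.A i j) (-(g.A i j)))) • FF.x0 b j)
  | kx1 (b : Bool) (i j : I) :
      FinRel g (FF.k i * FF.x1 b j * FF.kinv i)
        ((g.qi i ^ (cond b (g.A i j) (-(g.A i j)))) • FF.x1 b j)
  /- (v) `[x^+_{i,0}, x^-_{j,0}] = δ_{ij} (k_i - k_i⁻¹)/(q_i - q_i⁻¹)` -/
  | x00 (i j : I) :
      FinRel g (FF.x0 true i * FF.x0 false j - FF.x0 false j * FF.x0 true i)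
        (if i = j then ((g.qi i - (g.qi i)⁻¹)⁻¹) • (FF.k i - FF.kinv i) else 0)
  /- (vi) `[x^+_{i,-1}, x^-_{j,1}] = δ_{ij} (C⁻¹ k_i - C k_i⁻¹)/(q_i - q_i⁻¹)` -/
  | x11 (i j : I) :
      FinRel g (FF.x1 true i * FF.x1 false j - FF.x1 false j * FF.x1 true i)
        (if i = j then
          ((g.qi i - (g.qi i)⁻¹)⁻¹) • (FF.cinv * FF.k i - FF.c * FF.kinv i) else 0)
  /- (vii) `[x^+_{i,0}, x^-_{j,1}] = [x^+_{i,-1}, x^-_{j,0}] = 0` for `i ≠ j` -/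
  | x01 (i j : I) (hij : i ≠ j) :
      FinRel g (FF.x0 true i * FF.x1 false j) (FF.x1 false j * FF.x0 true i)
  | x10 (i j : I) (hij : i ≠ j) :
      FinRel g (FF.x1 true i * FF.x0 false j) (FF.x0 false j * FF.x1 true i)
  /- (viii) `[x^+_{i,0}, x^+_{i,-1}]_{q_i²} = [x^-_{i,1}, x^-_{i,0}]_{q_i^{-2}} = 0` -/
  | same_p (i : I) : FinRel g (tc (g.qi i ^ (2 : ℤ)) (FF.x0 true i) (FF.x1 true i)) 0
  | same_m (i : I) : FinRel g (tc (g.qi i ^ (-2 : ℤ)) (FF.x1 false i) (FF.x0 false i)) 0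
  /- (ix) `[x^+_{i,0}, x^+_{j,-1}]_{q_i^{a_{ij}}} + [x^+_{j,0}, x^+_{i,-1}]_{q_i^{a_{ij}}} = 0`
      whenever `a_{ij} < 0` -/
  | mix_p (i j : I) (hij : g.A i j < 0) :
      FinRel g (tc (g.qi i ^ g.A i j) (FF.x0 true i) (FF.x1 true j) +
        tc (g.qi i ^ g.A i j) (FF.x0 true j) (FF.x1 true i)) 0
  /- (x) minus version -/
  | mix_m (i j : I) (hij : g.A i j < 0) :
      FinRel g (tc (g.qi i ^ (-(g.A i j))) (FF.x1 false i) (FF.x0 false j) +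
        tc (g.qi i ^ (-(g.A i j))) (FF.x1 false j) (FF.x0 false i)) 0
  /- (xi) quantum Serre relations, for
     `(y_i, y_j) = (x^±_{i,0}, x^±_{j,0}), (x^±_{i,∓1}, x^±_{j,0}), (x^±_{i,0}, x^±_{j,∓1})` -/
  | serre (b : Bool) (i j : I) (hij : i ≠ j) (p : Fin 3) :
      FinRel g (∑ s ∈ Finset.range ((1 - g.A i j).toNat + 1),
        (((-1 : 𝕂) ^ s) * qbinom (g.qi i) (1 - g.A i j).toNat s) •
          ((if p = 1 then FF.x1 b i else FF.x0 b i) ^ s *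
            (if p = 2 then FF.x1 b j else FF.x0 b j) *
            (if p = 1 then FF.x1 b i else FF.x0 b i) ^ ((1 - g.A i j).toNat - s))) 0

/-- The finitely presented algebra of Proposition `simpler toroidal
presentation` (and, in rank 2, the algebra `A_X` of Lemma `lemma for new
toroidal presentation`). -/
abbrev FP {I : Type} (g : GCM I) : Type := RingQuot (FinRel g)

namespace FP
variable {I : Type} (g : GCM I)
def mk : FF I →ₐ[𝕂] FP g := RingQuot.mkAlgHom 𝕂 (FinRel g)
def x0 (b : Bool) (i : I) : FP g := mk g (FF.x0 b i)
def x1 (b : Bool) (i : I) : FP g := mk g (FF.x1 b i)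
def k (i : I) : FP g := mk g (FF.k i)
def kinv (i : I) : FP g := mk g (FF.kinv i)
def c : FP g := mk g FF.c
def cinv : FP g := mk g FF.cinv
end FP

end QTor

namespace QTor
open scoped Classical

/-! ### The braid group `B̂` of a quantum affinization -/

/-- The group of automorphisms of the Dynkin diagram of a GCM. -/
def diagAut {N : ℕ} (g : GCM (Fin N)) : Subgroup (Equiv.Perm (Fin N)) where
  carrier := {e | ∀ i j, g.A (e i) (e j) = g.A i j}
  one_mem' := by intro i j; rfl
  mul_mem' := by
    intro a b ha hb i j
    simpa [Equiv.Perm.mul_apply] using (ha (b i) (b j)).trans (hb i j)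
  inv_mem' := by
    intro a ha i j
    have := ha (a⁻¹ i) (a⁻¹ j)
    simpa using this.symm

/-- Generators of the group `B̂`: `T_i`, `X_i` (`i ∈ I`), and `π ∈ Ω`. -/
inductive HGen (N : ℕ) (Ω : Type) : Type
  | T : Fin N → HGen N Ω
  | X : Fin N → HGen N Ω
  | pi : Ω → HGen N Ω

/-- Defining relations of `B̂` (for a generalised Cartan matrix with
`a_{ij}a_{ji} ≤ 3` off the diagonal). -/
inductive HRel {N : ℕ} (g : GCM (Fin N)) {Ω : Type} [Group Ω]
    (ρ : Ω →* Equiv.Perm (Fin N)) : FreeGroup (HGen N Ω) → Prop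
  /- braid relations whenever `a_{ij} a_{ji} ≤ 3` -/
  | braid (i j : Fin N) (hij : i ≠ j) (hle : g.A i j * g.A j i ≤ 3) :
      HRel g ρ (altWord (FreeGroup.of (HGen.T i)) (FreeGroup.of (HGen.T j))
          ((g.A i j * g.A j i).toNat + 2) *
        (altWord (FreeGroup.of (HGen.T j)) (FreeGroup.of (HGen.T i))
          ((g.A i j * g.A j i).toNat + 2))⁻¹)
  /- `X_i X_j = X_j X_i` -/
  | xx (i j : Fin N) :
      HRel g ρ (FreeGroup.of (HGen.X i) * FreeGroup.of (HGen.X j) *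
        (FreeGroup.of (HGen.X j) * FreeGroup.of (HGen.X i))⁻¹)
  /- `T_i X_j = X_j T_i` whenever `i ≠ j` -/
  | tx (i j : Fin N) (hij : i ≠ j) :
      HRel g ρ (FreeGroup.of (HGen.T i) * FreeGroup.of (HGen.X j) *
        (FreeGroup.of (HGen.X j) * FreeGroup.of (HGen.T i))⁻¹)
  /- `T_i⁻¹ X_i T_i⁻¹ = X_i ∏_{j ∈ I} X_j^{-a_{ij}}` -/
  | txi (i : Fin N) :
      HRel g ρ ((FreeGroup.of (HGen.T i))⁻¹ * FreeGroup.of (HGen.X i) *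
        (FreeGroup.of (HGen.T i))⁻¹ *
        (FreeGroup.of (HGen.X i) *
          (List.ofFn fun j : Fin N => (FreeGroup.of (HGen.X j)) ^ (-(g.A i j))).prod)⁻¹)
  /- `π T_i π⁻¹ = T_{π(i)}` -/
  | piT (ω : Ω) (i : Fin N) :
      HRel g ρ (FreeGroup.of (HGen.pi ω) * FreeGroup.of (HGen.T i) *
        (FreeGroup.of (HGen.pi ω))⁻¹ * (FreeGroup.of (HGen.T (ρ ω i)))⁻¹)
  /- `π X_i π⁻¹ = X_{π(i)}` -/
  | piX (ω : Ω) (i : Fin N) :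
      HRel g ρ (FreeGroup.of (HGen.pi ω) * FreeGroup.of (HGen.X i) *
        (FreeGroup.of (HGen.pi ω))⁻¹ * (FreeGroup.of (HGen.X (ρ ω i)))⁻¹)
  /- the generators indexed by `Ω` multiply as in `Ω` -/
  | pimul (ω ω' : Ω) :
      HRel g ρ (FreeGroup.of (HGen.pi ω) * FreeGroup.of (HGen.pi ω') *
        (FreeGroup.of (HGen.pi (ω * ω')))⁻¹)

/-- The group `B̂` attached to a generalised Cartan matrix. -/
abbrev BHat {N : ℕ} (g : GCM (Fin N)) {Ω : Type} [Group Ω]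
    (ρ : Ω →* Equiv.Perm (Fin N)) : Type :=
  PresentedGroup {w | HRel g ρ w}

end QTor

namespace QTor
open scoped Classical

lemma q_pow_ne_one {n : ℕ} (hn : n ≠ 0) : (q : 𝕂) ^ n ≠ 1 := by
  intro h
  have : (algebraMap (Polynomial ℚ) (RatFunc ℚ)) (Polynomial.X ^ n) =
      (algebraMap (Polynomial ℚ) (RatFunc ℚ)) 1 := by
    simpa [map_pow, RatFunc.algebraMap_X] using h
  have h2 := RatFunc.algebraMap_injective ℚ this
  have := congrArg Polynomial.natDegree h2
  simp [Polynomial.natDegree_X_pow] at this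
  exact hn this

lemma q_ne_zero : (q : 𝕂) ≠ 0 := RatFunc.X_ne_zero

lemma qi_ne_zero {I : Type} (g : GCM I) (i : I) : g.qi i ≠ 0 :=
  pow_ne_zero _ q_ne_zero

/-- `u^m - u^{-m} ≠ 0` for `u = q^d`, `d ≥ 1`, `m ≠ 0`. -/
lemma qi_zpow_sub_ne {I : Type} (g : GCM I) (i : I) {m : ℤ} (hm : m ≠ 0) :
    g.qi i ^ m - g.qi i ^ (-m) ≠ 0 := by
  have hu : g.qi i ≠ 0 := qi_ne_zero g i
  intro h
  have h1 : g.qi i ^ m = g.qi i ^ (-m) := by linear_combination h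
  have h2 : g.qi i ^ (2 * m) = 1 := by
    rw [two_mul, zpow_add₀ hu]
    nth_rewrite 1 [h1]
    rw [← zpow_add₀ hu, neg_add_cancel, zpow_zero]
  -- reduce to natural power of q
  have h3 : (q : 𝕂) ^ ((g.d i : ℤ) * (2 * m)) = 1 := by
    rw [← h2, GCM.qi, ← zpow_natCast, ← zpow_mul]
  rcases lt_trichotomy ((g.d i : ℤ) * (2 * m)) 0 with hlt | heq | hgt
  · have : (q : 𝕂) ^ (-( (g.d i : ℤ) * (2 * m))).toNat = 1 := by
      rw [← zpow_natCast, Int.toNat_of_nonneg (by omega), zpow_neg, h3, inv_one]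
    exact q_pow_ne_one (by omega) this
  · have hd := g.dpos i
    have : (g.d i : ℤ) ≠ 0 := by exact_mod_cast hd.ne'
    exact absurd heq (by positivity <;> omega)
  · have : (q : 𝕂) ^ ((g.d i : ℤ) * (2 * m)).toNat = 1 := by
      rw [← zpow_natCast, Int.toNat_of_nonneg (by omega), h3]
    exact q_pow_ne_one (by omega) this

lemma qsub_ne {I : Type} (g : GCM I) (i : I) : g.qi i - (g.qi i)⁻¹ ≠ 0 := by
  have := qi_zpow_sub_ne g i (m := 1) one_ne_zero
  simpa [zpow_one] using this

lemma qnum_ne {I : Type} (g : GCM I) (i : I) {m : ℤ} (hm : m ≠ 0) :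
    qnum (g.qi i) m ≠ 0 :=
  div_ne_zero (qi_zpow_sub_ne g i hm) (qsub_ne g i)

end QTor
namespace QTor
open scoped Classical

variable {I : Type} (g : GCM I)

lemma QArel {a b : FA I} (h : ARel g a b) : QA.mk g a = QA.mk g b :=
  RingQuot.mkAlgHom_rel 𝕂 h

lemma c_mul_cinv : QA.c g * QA.cinv g = 1 := by
  have := QArel g (ARel.c_inv (I := I) true)
  simpa [QA.c, QA.cinv, FA.c, FA.cinv, map_mul] using this

lemma cinv_mul_c : QA.cinv g * QA.c g = 1 := by
  have := QArel g (ARel.c_inv (I := I) false)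
  simpa [QA.c, QA.cinv, FA.c, FA.cinv, map_mul] using this

lemma k_mul_kinv (i : I) : QA.k g i * QA.kinv g i = 1 := by
  have := QArel g (ARel.k_inv true i)
  simpa [QA.k, QA.kinv, FA.k, FA.kinv, map_mul] using this

lemma kinv_mul_k (i : I) : QA.kinv g i * QA.k g i = 1 := by
  have := QArel g (ARel.k_inv false i)
  simpa [QA.k, QA.kinv, FA.k, FA.kinv, map_mul] using this

lemma commute_c_cinv : Commute (QA.c g) (QA.cinv g) := by
  have := QArel g (ARel.c_comm (I := I) true (Gen.c false))
  simpa [QA.c, QA.cinv, FA.c, FA.cinv, map_mul, Commute, SemiconjBy] using this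

lemma c_pow_mul_cinv_pow (n : ℕ) : QA.c g ^ n * QA.cinv g ^ n = 1 := by
  rw [← (commute_c_cinv g).mul_pow, c_mul_cinv, one_pow]

lemma cinv_pow_mul_c_pow (n : ℕ) : QA.cinv g ^ n * QA.c g ^ n = 1 := by
  rw [← (commute_c_cinv g).symm.mul_pow, cinv_mul_c, one_pow]

lemma cpow_def (r : ℤ) :
    QA.cpow g r = if 0 ≤ r then QA.c g ^ r.toNat else QA.cinv g ^ (-r).toNat := by
  unfold QA.cpow FA.cpow
  rw [apply_ite (QA.mk g)]
  simp [map_pow, QA.c, QA.cinv]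

lemma cpow_mul_cpow_neg (r : ℤ) : QA.cpow g r * QA.cpow g (-r) = 1 := by
  rw [cpow_def, cpow_def]
  rcases lt_trichotomy r 0 with h | rfl | h
  · rw [if_neg (not_le.2 h), if_pos (by omega)]
    exact cinv_pow_mul_c_pow g _
  · simp
  · rw [if_pos h.le, if_neg (by omega)]
    rw [neg_neg]
    exact c_pow_mul_cinv_pow g _

/-- The subalgebra generated by the six elements. -/
def A6 (i : I) : Subalgebra 𝕂 (QA g) :=
  Algebra.adjoin 𝕂
    {QA.x g true i 0, QA.x g false i 0, QA.x g true i (-1), QA.x g false i 1,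
      QA.k g i, QA.kinv g i, QA.c g, QA.cinv g}

variable (i : I)

lemma xp0_mem : QA.x g true i 0 ∈ A6 g i := Algebra.subset_adjoin (by simp)
lemma xm0_mem : QA.x g false i 0 ∈ A6 g i := Algebra.subset_adjoin (by simp)
lemma xp1_mem : QA.x g true i (-1) ∈ A6 g i := Algebra.subset_adjoin (by simp)
lemma xm1_mem : QA.x g false i 1 ∈ A6 g i := Algebra.subset_adjoin (by simp)
lemma k_mem : QA.k g i ∈ A6 g i := Algebra.subset_adjoin (by simp)
lemma kinv_mem : QA.kinv g i ∈ A6 g i := Algebra.subset_adjoin (by simp)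
lemma c_mem : QA.c g ∈ A6 g i := Algebra.subset_adjoin (by simp)
lemma cinv_mem : QA.cinv g ∈ A6 g i := Algebra.subset_adjoin (by simp)

lemma cpow_mem (r : ℤ) : QA.cpow g r ∈ A6 g i := by
  rw [cpow_def]
  split
  · exact pow_mem (c_mem g i) _
  · exact pow_mem (cinv_mem g i) _

lemma smul_unit_mem {s : 𝕂} (hs : s ≠ 0) {a : QA g} (h : s • a ∈ A6 g i) :
    a ∈ A6 g i := by
  have := (A6 g i).smul_mem h s⁻¹
  simpa [smul_smul, inv_mul_cancel₀ hs] using this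

end QTor

namespace QTor
variable {I : Type} (g : GCM I)
lemma mk_cpow (r : ℤ) : QA.mk g (FA.cpow r) = QA.cpow g r := rfl
lemma mk_k (i : I) : QA.mk g (FA.k i) = QA.k g i := rfl
lemma mk_kinv (i : I) : QA.mk g (FA.kinv i) = QA.kinv g i := rfl
lemma mk_x (b : Bool) (i : I) (m : ℤ) : QA.mk g (FA.x b i m) = QA.x g b i m := rfl
lemma mk_h (i : I) (r : ℤ) : QA.mk g (FA.h i r) = QA.h g i r := rfl
lemma mk_c : QA.mk g (FA.c : FA I) = QA.c g := rfl
lemma mk_cinv : QA.mk g (FA.cinv : FA I) = QA.cinv g := rfl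
end QTor
namespace QTor
open scoped Classical

variable {I : Type} (g : GCM I)

lemma filt_one (r : ℕ) (hr : 1 ≤ r) :
    (Finset.Nat.antidiagonalTuple 1 r).filter (fun f => ∀ t, f t ≠ 0) = {![r]} := by
  ext f
  simp only [Finset.mem_filter, Finset.Nat.mem_antidiagonalTuple, Finset.mem_singleton,
    Fin.sum_univ_one]
  constructor
  · rintro ⟨h0, _⟩
    funext t
    have : t = 0 := Subsingleton.elim _ _
    subst this
    simpa using h0
  · rintro rfl
    refine ⟨by simp, fun t => ?_⟩
    have : t = 0 := Subsingleton.elim _ _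
    subst this
    simpa using by omega

lemma part_lt {l r : ℕ} (hl : l ≠ 1) {comp : Fin l → ℕ}
    (hc : comp ∈ Finset.Nat.antidiagonalTuple l r) (hnz : ∀ t, comp t ≠ 0) (t : Fin l) :
    comp t < r := by
  rcases Nat.lt_or_ge l 2 with h2 | h2
  · have : l = 0 := by omega
    subst this
    exact t.elim0
  · have hsum : ∑ t', comp t' = r := Finset.Nat.mem_antidiagonalTuple.mp hc
    set t' : Fin l := if t.val = 0 then ⟨1, by omega⟩ else ⟨0, by omega⟩ with ht'
    have htv : t'.val = if t.val = 0 then 1 else 0 := by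
      rw [ht']; split <;> rfl
    have htt : t ≠ t' := by
      intro hcon
      have h2' := congrArg Fin.val hcon
      rw [htv] at h2'
      split at h2' <;> omega
    have hle : comp t + comp t' ≤ r := by
      rw [← hsum]
      have hsub := Finset.sum_le_sum_of_subset
        (Finset.subset_univ ({t, t'} : Finset (Fin l))) (f := comp)
      simpa [Finset.sum_pair htt] using hsub
    have := Nat.pos_of_ne_zero (hnz t')
    omega

lemma phiAux_mk_mem (i : I) (ε : ℤ) (r : ℕ) (hr : 1 ≤ r)
    (hind : ∀ s : ℕ, 0 < s → s < r → QA.h g i (ε * s) ∈ A6 g i) :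
    QA.mk g (phiAux (g.qi i) i ε r) -
      ((ε : 𝕂) * (g.qi i - (g.qi i)⁻¹)) • QA.h g i (ε * r) ∈ A6 g i := by
  unfold phiAux
  rw [map_sum]
  simp only [map_smul, map_sum]
  have h1mem : (1 : ℕ) ∈ Finset.range (r + 1) := by
    simp only [Finset.mem_range]; omega
  rw [← Finset.add_sum_erase _ _ h1mem]
  have e1 : (((ε : 𝕂) ^ 1 * (g.qi i - (g.qi i)⁻¹) ^ 1) / (Nat.factorial 1 : 𝕂)) •
      ∑ comp ∈ (Finset.Nat.antidiagonalTuple 1 r).filter (fun f => ∀ t, f t ≠ 0),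
        QA.mk g (List.ofFn (fun t : Fin 1 => FA.h i (ε * (comp t : ℤ)))).prod =
      ((ε : 𝕂) * (g.qi i - (g.qi i)⁻¹)) • QA.h g i (ε * r) := by
    rw [filt_one r hr, Finset.sum_singleton]
    simp [List.ofFn_succ, QA.h, Nat.factorial]
  rw [e1, add_sub_cancel_left]
  refine Subalgebra.sum_mem _ fun l hl => Subalgebra.smul_mem _ (Subalgebra.sum_mem _
    fun comp hcomp => ?_) _
  rw [map_list_prod]
  refine Subalgebra.list_prod_mem _ fun a ha => ?_
  rw [List.mem_map] at ha
  obtain ⟨b, hb, rfl⟩ := ha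
  rw [List.mem_ofFn] at hb
  obtain ⟨t, rfl⟩ := hb
  rw [Finset.mem_filter] at hcomp
  have hlt := part_lt (Finset.mem_erase.mp hl).1 hcomp.1 hcomp.2 t
  exact hind (comp t) (Nat.pos_of_ne_zero (hcomp.2 t)) hlt

end QTor
namespace QTor
open scoped Classical

variable {I : Type} (g : GCM I)

lemma key_pos (i : I) (r : ℕ) (hr : 1 ≤ r) (hx1 : QA.x g false i (r : ℤ) ∈ A6 g i)
    (hind : ∀ s : ℕ, 0 < s → s < r → QA.h g i (s : ℤ) ∈ A6 g i) :
    QA.h g i (r : ℤ) ∈ A6 g i := by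
  have hphiF : phi g false i (0 + (r : ℤ)) = 0 := by
    simp only [phi]
    rw [if_neg (by simp), if_neg (by omega)]
  have hphiT : phi g true i (0 + (r : ℤ)) = FA.k i * phiAux (g.qi i) i 1 r := by
    simp only [phi]
    rw [if_pos trivial, if_pos (by omega),
      show ((0 : ℤ) + (r : ℤ)).toNat = r by omega]
  have hrel := QArel g (ARel.xpm i i 0 (r : ℤ))
  rw [if_pos rfl, hphiF, hphiT, mul_zero, sub_zero] at hrel
  simp only [map_sub, map_mul, map_smul, mk_cpow, mk_k, mk_kinv, mk_x] at hrel
  set P := QA.mk g (phiAux (g.qi i) i 1 r) with hPdef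
  have hP : P = QA.kinv g i * (QA.cpow g r * ((g.qi i - (g.qi i)⁻¹) •
      (QA.x g true i 0 * QA.x g false i r -
        QA.x g false i r * QA.x g true i 0))) := by
    rw [hrel, smul_smul, mul_inv_cancel₀ (qsub_ne g i), one_smul]
    rw [← mul_assoc (QA.cpow g r), cpow_mul_cpow_neg, one_mul, ← mul_assoc,
      kinv_mul_k, one_mul]
  have hPmem : P ∈ A6 g i := by
    rw [hP]
    exact mul_mem (kinv_mem _ _) (mul_mem (cpow_mem _ _ _)
      (Subalgebra.smul_mem _ (sub_mem (mul_mem (xp0_mem _ _) hx1)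
        (mul_mem hx1 (xp0_mem _ _))) _))
  have hD := phiAux_mk_mem g i 1 r hr (fun s hs hsr => by simpa using hind s hs hsr)
  simp only [Int.cast_one, one_mul] at hD
  have hfin : (g.qi i - (g.qi i)⁻¹) • QA.h g i (r : ℤ) ∈ A6 g i := by
    have := sub_mem hPmem hD
    rw [← hPdef] at this
    simpa [sub_sub_cancel] using this
  exact smul_unit_mem g i (qsub_ne g i) hfin

lemma key_neg (i : I) (r : ℕ) (hr : 1 ≤ r) (hx1 : QA.x g true i (-(r : ℤ)) ∈ A6 g i)
    (hind : ∀ s : ℕ, 0 < s → s < r → QA.h g i (-(s : ℤ)) ∈ A6 g i) :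
    QA.h g i (-(r : ℤ)) ∈ A6 g i := by
  have hphiT : phi g true i (-(r : ℤ) + 0) = 0 := by
    simp only [phi]
    rw [if_pos trivial, if_neg (by omega)]
  have hphiF : phi g false i (-(r : ℤ) + 0) = FA.kinv i * phiAux (g.qi i) i (-1) r := by
    simp only [phi]
    rw [if_neg (by simp), if_pos (by omega),
      show (-(-(r : ℤ) + 0)).toNat = r by omega]
  have hrel := QArel g (ARel.xpm i i (-(r : ℤ)) 0)
  rw [if_pos rfl, hphiF, hphiT, mul_zero, zero_sub, neg_neg] at hrel
  simp only [map_sub, map_mul, map_smul, map_neg, mk_cpow, mk_k, mk_kinv, mk_x] at hrel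
  set P := QA.mk g (phiAux (g.qi i) i (-1) r) with hPdef
  have hc : QA.cpow g (-(r : ℤ)) * QA.cpow g (r : ℤ) = 1 := by
    have := cpow_mul_cpow_neg g (-(r : ℤ))
    rwa [neg_neg] at this
  have hP : P = QA.k g i * (QA.cpow g (-(r : ℤ)) * ((-(g.qi i - (g.qi i)⁻¹)) •
      (QA.x g true i (-(r : ℤ)) * QA.x g false i 0 -
        QA.x g false i 0 * QA.x g true i (-(r : ℤ))))) := by
    rw [hrel, smul_smul, neg_mul, mul_inv_cancel₀ (qsub_ne g i), neg_smul, one_smul,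
      neg_neg]
    rw [← mul_assoc (QA.cpow g (-(r : ℤ))), hc, one_mul, ← mul_assoc,
      k_mul_kinv, one_mul]
  have hPmem : P ∈ A6 g i := by
    rw [hP]
    exact mul_mem (k_mem _ _) (mul_mem (cpow_mem _ _ _)
      (Subalgebra.smul_mem _ (sub_mem (mul_mem hx1 (xm0_mem _ _))
        (mul_mem (xm0_mem _ _) hx1)) _))
  have hD := phiAux_mk_mem g i (-1) r hr (fun s hs hsr => by
    have := hind s hs hsr
    simpa [neg_one_mul] using this)
  simp only [Int.cast_neg, Int.cast_one, neg_one_mul, neg_smul, sub_neg_eq_add] at hD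
  have hfin : ((g.qi i)⁻¹ - g.qi i) • QA.h g i (-(r : ℤ)) ∈ A6 g i := by
    have := sub_mem hD hPmem
    rw [← hPdef] at this
    simpa [add_sub_cancel_left] using this
  have hne : (g.qi i)⁻¹ - g.qi i ≠ 0 := fun h => qsub_ne g i (by linear_combination -h)
  exact smul_unit_mem g i hne hfin

end QTor
namespace QTor
open scoped Classical

variable {I : Type} (g : GCM I)

instance : CharZero 𝕂 :=
  charZero_of_injective_algebraMap (RatFunc.algebraMap_injective ℚ)

lemma x_step (b : Bool) (i : I) (r m : ℤ) (hr : r ≠ 0)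
    (hrA : QA.h g i r ∈ A6 g i) (hm : QA.x g b i m ∈ A6 g i) :
    QA.x g b i (r + m) ∈ A6 g i := by
  have hrel := QArel g (ARel.hx b i i r m hr)
  simp only [map_sub, map_mul, map_smul, mk_x, mk_h, mk_cpow] at hrel
  set e : ℤ := cond b (min r 0) (max r 0) with he
  set s : 𝕂 := (cond b 1 (-1) : 𝕂) * qnum (g.qi i) (r * g.A i i) / (r : 𝕂) with hs
  have hsne : s ≠ 0 := by
    rw [hs]
    refine div_ne_zero (mul_ne_zero ?_ (qnum_ne g i ?_)) ?_
    · cases b <;> norm_num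
    · rw [g.diag i]; omega
    · exact Int.cast_ne_zero.mpr hr
  have hce : QA.cpow g (-e) * QA.cpow g e = 1 := by
    have := cpow_mul_cpow_neg g (-e)
    rwa [neg_neg] at this
  have heq : QA.cpow g (-e) *
      (QA.h g i r * QA.x g b i m - QA.x g b i m * QA.h g i r) =
      s • QA.x g b i (r + m) := by
    rw [hrel, mul_smul_comm, ← mul_assoc, hce, one_mul]
  refine smul_unit_mem g i hsne ?_
  rw [← heq]
  exact mul_mem (cpow_mem g i _) (sub_mem (mul_mem hrA hm) (mul_mem hm hrA))

lemma h1_mem (i : I) : QA.h g i 1 ∈ A6 g i := by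
  have := key_pos g i 1 le_rfl (by simpa using xm1_mem g i)
    (fun s hs hsr => absurd hsr (by omega))
  simpa using this

lemma hm1_mem (i : I) : QA.h g i (-1) ∈ A6 g i := by
  have := key_neg g i 1 le_rfl (by simpa using xp1_mem g i)
    (fun s hs hsr => absurd hsr (by omega))
  simpa using this

lemma x_memAll (b : Bool) (i : I) (m : ℤ) : QA.x g b i m ∈ A6 g i := by
  induction m using Int.induction_on with
  | zero => cases b
            · exact xm0_mem g i
            · exact xp0_mem g i
  | succ n ih =>
      have := x_step g b i 1 n one_ne_zero (h1_mem g i) ih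
      rwa [show (1 : ℤ) + n = n + 1 by ring] at this
  | pred n ih =>
      have := x_step g b i (-1) (-n) (by norm_num) (hm1_mem g i) ih
      rwa [show (-1 : ℤ) + -(n : ℤ) = -(n : ℤ) - 1 by ring] at this

lemma h_mem_nat (i : I) : ∀ r : ℕ, 1 ≤ r →
    QA.h g i (r : ℤ) ∈ A6 g i ∧ QA.h g i (-(r : ℤ)) ∈ A6 g i := by
  intro r
  induction r using Nat.strong_induction_on with
  | _ r ih =>
    intro hr
    constructor
    · exact key_pos g i r hr (x_memAll g false i r)
        (fun s hs hsr => (ih s hsr hs).1)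
    · exact key_neg g i r hr (x_memAll g true i (-(r : ℤ)))
        (fun s hs hsr => (ih s hsr hs).2)

lemma h_memZ (i : I) (r : ℤ) (hr : r ≠ 0) : QA.h g i r ∈ A6 g i := by
  rcases Int.natAbs_eq r with h | h
  · rw [h]; exact (h_mem_nat g i r.natAbs (by omega)).1
  · rw [h]; exact (h_mem_nat g i r.natAbs (by omega)).2

theorem Ui_generated_by_six_elements' (i : I) :
    Algebra.adjoin 𝕂
        ({u : QA g | ∃ b m, u = QA.x g b i m} ∪
          {u : QA g | ∃ r : ℤ, r ≠ 0 ∧ u = QA.h g i r} ∪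
          {QA.k g i, QA.kinv g i, QA.c g, QA.cinv g}) =
      Algebra.adjoin 𝕂
        {QA.x g true i 0, QA.x g false i 0, QA.x g true i (-1), QA.x g false i 1,
          QA.k g i, QA.kinv g i, QA.c g, QA.cinv g} := by
  apply le_antisymm
  · rw [Algebra.adjoin_le_iff]
    intro u hu
    show u ∈ A6 g i
    rcases hu with (hu | hu) | hu
    · obtain ⟨b, m, rfl⟩ := hu
      exact x_memAll g b i m
    · obtain ⟨r, hr, rfl⟩ := hu
      exact h_memZ g i r hr
    · rcases hu with rfl | rfl | rfl | rfl
      · exact k_mem g i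
      · exact kinv_mem g i
      · exact c_mem g i
      · exact cinv_mem g i
  · apply Algebra.adjoin_mono
    intro u hu
    rcases hu with rfl | rfl | rfl | rfl | rfl | rfl | rfl | rfl
    · exact Or.inl (Or.inl ⟨true, 0, rfl⟩)
    · exact Or.inl (Or.inl ⟨false, 0, rfl⟩)
    · exact Or.inl (Or.inl ⟨true, -1, rfl⟩)
    · exact Or.inl (Or.inl ⟨false, 1, rfl⟩)
    · exact Or.inr (Or.inl rfl)
    · exact Or.inr (Or.inr (Or.inl rfl))
    · exact Or.inr (Or.inr (Or.inr (Or.inl rfl)))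
    · exact Or.inr (Or.inr (Or.inr (Or.inr rfl)))

end QTor

namespace QTor
open scoped Classical

/-- For a symmetrizable Kac–Moody algebra with
`a_{ij} a_{ji} ≤ 3` for all distinct `i, j`, the subalgebra `U_i` of the
quantum affinization generated by `{x^±_{i,m}, h_{i,r}, k_i^{±1}, C^{±1}}`
is already generated by the six elements `x^±_{i,0}`, `x^+_{i,-1}`,
`x^-_{i,1}`, `k_i^{±1}` and `C^{±1}`. -/
theorem Ui_generated_by_six_elements {I : Type} (g : GCM I)
    (hsmall : ∀ ⦃i j⦄, i ≠ j → g.A i j * g.A j i ≤ 3) (i : I) :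
    Algebra.adjoin 𝕂
        ({u : QA g | ∃ b m, u = QA.x g b i m} ∪
          {u : QA g | ∃ r : ℤ, r ≠ 0 ∧ u = QA.h g i r} ∪
          {QA.k g i, QA.kinv g i, QA.c g, QA.cinv g}) =
      Algebra.adjoin 𝕂
        {QA.x g true i 0, QA.x g false i 0, QA.x g true i (-1), QA.x g false i 1,
          QA.k g i, QA.kinv g i, QA.c g, QA.cinv g} := by
  exact Ui_generated_by_six_elements' g i

end QTor
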